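/- In a signed graph Σ, a vertex v belongs to some negative cycle if and only if v lies in an unbalanced block of Σ. -/

import Mathlib

open SimpleGraph
variable {V : Type*}

/-- A signed graph `(G, σ)` is balanced: every cycle has sign `+1`. -/
def SBalanced (G : SimpleGraph V) (σ : Sym2 V → ℤˣ) : Prop :=
  ∀ (u : V) (w : G.Walk u u), w.IsCycle → (w.edges.map σ).prod = 1

/-- `B` has no cut vertex. -/
def NoCutVertex (G : SimpleGraph V) (B : G.Subgraph) : Prop :=
  ∀ v ∈ B.verts, (B.deleteVerts {v}).verts.Nonempty → (B.deleteVerts {v}).Connected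

/-- A block: a maximal connected subgraph with no cut vertex. -/
def IsBlock (G : SimpleGraph V) (B : G.Subgraph) : Prop :=
  B.Connected ∧ NoCutVertex G B ∧
    ∀ B' : G.Subgraph, B'.Connected → NoCutVertex G B' → B ≤ B' → B' = B

/-- The subgraph `B` contains a negative cycle. -/
def UnbalancedSub (G : SimpleGraph V) (σ : Sym2 V → ℤˣ) (B : G.Subgraph) : Prop :=
  ∃ (u : V) (w : G.Walk u u), w.IsCycle ∧ (∀ e ∈ w.edges, e ∈ B.edgeSet) ∧
    (w.edges.map σ).prod = -1

/-!
A cycle has no cut vertex, so by Zorn's lemma it lies in a maximal such subgraph, a block.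
Conversely, in a block `B` the vertices lying on a negative cycle of `B` form a set closed under
adjacency, hence all of `B`. If `x` lies on a negative cycle `C` of `B` and its neighbour `v` does
not, then since `x` is not a cut vertex there is a path from `v` to `C` avoiding `x`; stopped at
its first vertex on `C`, it forms with the edge `vx` an ear, which closes up with either arc of
`C` to a cycle through `v`. The signs of these two cycles multiply to the sign of `C`, so one of
them is negative.
-/

namespace SimpleGraph.Walk

variable {G : SimpleGraph V} {u v w x : V}

lemma IsSubwalk.toSubgraph_le {u' v' : V} {p : G.Walk u v} {q : G.Walk u' v'}
    (h : p.IsSubwalk q) : p.toSubgraph ≤ q.toSubgraph := by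
  obtain ⟨ru, rv, rfl⟩ := h
  simp only [toSubgraph_append]
  exact le_sup_right.trans le_sup_left

lemma IsCycle.connected_toSubgraph_deleteVerts_start {C : G.Walk x x} (hC : C.IsCycle) :
    (C.toSubgraph.deleteVerts {x}).Connected := by
  set P := C.tail.dropLast
  have hT : ¬C.tail.Nil := by
    rw [← length_eq_zero_iff, length_tail]; have := hC.three_le_length; omega
  have hTsupp : C.tail.support = P.support ++ [x] := (support_dropLast_concat hT).symm
  have hxP : x ∉ P.support := by
    have := hC.isPath_tail.support_nodup
    rw [hTsupp, List.nodup_append] at this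
    exact fun hx ↦ this.2.2 x hx x (List.mem_singleton_self x) rfl
  have hCsupp : C.support = x :: (P.support ++ [x]) := by
    rw [← cons_support_tail hC.not_nil, hTsupp]
  have hverts : P.toSubgraph.verts = (C.toSubgraph.deleteVerts {x}).verts := by
    ext z
    simp only [Subgraph.deleteVerts_verts, Set.mem_sdiff, mem_verts_toSubgraph,
      Set.mem_singleton_iff, hCsupp, List.mem_cons, List.mem_append, List.not_mem_nil, or_false]
    constructor
    · exact fun hz ↦ ⟨Or.inr (Or.inl hz), by rintro rfl; exact hxP hz⟩
    · rintro ⟨(rfl | hz | rfl), hzx⟩ <;> first | exact absurd rfl hzx | exact hz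
  have hle : P.toSubgraph ≤ C.toSubgraph.deleteVerts {x} := by
    refine ⟨hverts.le, fun a b hab ↦ ?_⟩
    have ha := hverts ▸ P.toSubgraph.edge_vert hab
    have hb := hverts ▸ P.toSubgraph.edge_vert hab.symm
    exact Subgraph.deleteVerts_adj.mpr ⟨ha.1, ha.2, hb.1, hb.2,
      ((isSubwalk_rfl C).tail.dropLast.toSubgraph_le).2 hab⟩
  exact P.toSubgraph_connected.mono hle hverts

lemma IsCycle.noCutVertex_toSubgraph {C : G.Walk u u} (hC : C.IsCycle) :
    NoCutVertex G C.toSubgraph := by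
  classical
  intro x hx _
  rw [mem_verts_toSubgraph] at hx
  rw [← toSubgraph_rotate C hx]
  exact (hC.rotate hx).connected_toSubgraph_deleteVerts_start

lemma exists_isPath_first_mem (S : Set V) (p : G.Walk u v) (hv : v ∈ S) :
    ∃ (c : V) (q : G.Walk u c), c ∈ S ∧ q.IsPath ∧ q.toSubgraph ≤ p.toSubgraph ∧
      ∀ z ∈ q.support, z ∈ S → z = c := by
  classical
  induction p with
  | nil => exact ⟨_, nil, hv, .nil, le_rfl, by simp⟩
  | @cons a b w h p ih =>
    by_cases ha : a ∈ S
    · exact ⟨a, nil, ha, .nil, by simp [Walk.toSubgraph], by simp⟩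
    obtain ⟨c, q, hc, -, hqp, hfirst⟩ := ih hv
    refine ⟨c, (cons h q).bypass, hc, bypass_isPath _,
      toSubgraph_bypass_le_toSubgraph.trans (sup_le_sup_left hqp _), fun z hz hzS ↦ ?_⟩
    rcases List.mem_cons.mp (support_bypass_subset_support _ hz) with rfl | hz
    · exact absurd hzS ha
    · exact hfirst z hz hzS

lemma IsPath.append_of_support_inter {p : G.Walk u v} {q : G.Walk v w} (hp : p.IsPath)
    (hq : q.IsPath) (h : ∀ z ∈ p.support, z ∈ q.support → z = v) : (p.append q).IsPath := by
  rw [isPath_def, support_append, List.nodup_append]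
  refine ⟨hp.support_nodup, hq.support_nodup.tail, fun a ha b hb hab ↦ ?_⟩
  subst hab
  obtain rfl := h a ha (List.mem_of_mem_tail hb)
  exact (List.nodup_cons.mp (q.cons_tail_support ▸ hq.support_nodup)).1 hb

lemma isCycle_cons_append_reverse {c : V} {A : G.Walk x c} {Q : G.Walk v c} (h : G.Adj v x)
    (hA : A.IsPath) (hQ : Q.IsPath) (hAQ : ∀ z ∈ A.support, z ∈ Q.support → z = c)
    (hvA : v ∉ A.support) (hxQ : x ∉ Q.support) : (cons h (A.append Q.reverse)).IsCycle := by
  refine (cons_isCycle_iff _ h).mpr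
    ⟨hA.append_of_support_inter hQ.reverse (by simpa using hAQ), fun he ↦ ?_⟩
  rw [edges_append, List.mem_append, edges_reverse, List.mem_reverse] at he
  rcases he with he | he
  · exact hvA (A.fst_mem_support_of_mem_edges he)
  · exact hxQ (Q.snd_mem_support_of_mem_edges he)

def sign (σ : Sym2 V → ℤˣ) (p : G.Walk u v) : ℤˣ := (p.edges.map σ).prod

variable (σ : Sym2 V → ℤˣ)

@[simp]
lemma sign_cons (h : G.Adj u v) (p : G.Walk v w) : (cons h p).sign σ = σ s(u, v) * p.sign σ := by
  simp [sign]

@[simp]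
lemma sign_append (p : G.Walk u v) (q : G.Walk v w) :
    (p.append q).sign σ = p.sign σ * q.sign σ := by
  simp [sign]

@[simp]
lemma sign_reverse (p : G.Walk u v) : p.reverse.sign σ = p.sign σ := by
  simp [sign, List.prod_reverse]

lemma sign_rotate [DecidableEq V] (c : G.Walk v v) (h : u ∈ c.support) :
    (c.rotate u h).sign σ = c.sign σ :=
  ((c.rotate_edges u h).perm.map σ).prod_eq

lemma IsCycle.exists_isCycle_sign_eq_neg_one_of_ear {C : G.Walk x x} (hC : C.IsCycle)
    (hσC : C.sign σ = -1) (h : G.Adj v x) (hvC : v ∉ C.support) {c : V} {Q : G.Walk v c}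
    (hQ : Q.IsPath) (hcC : c ∈ C.support) (hxQ : x ∉ Q.support)
    (hQC : ∀ z ∈ Q.support, z ∈ C.support → z = c) :
    ∃ D : G.Walk v v, D.IsCycle ∧
      D.toSubgraph ≤ G.subgraphOfAdj h ⊔ (C.toSubgraph ⊔ Q.toSubgraph) ∧ D.sign σ = -1 := by
  classical
  have cycle_of_arc (A : G.Walk x c) (hA : A.IsPath) (hAC : A.toSubgraph ≤ C.toSubgraph) :
      ∃ D : G.Walk v v, D.IsCycle ∧
        D.toSubgraph ≤ G.subgraphOfAdj h ⊔ (C.toSubgraph ⊔ Q.toSubgraph) ∧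
        D.sign σ = σ s(v, x) * A.sign σ * Q.sign σ := by
    have hAsupp : ∀ z ∈ A.support, z ∈ C.support := fun z hz ↦
      (mem_verts_toSubgraph C).mp (hAC.1 ((mem_verts_toSubgraph A).mpr hz))
    refine ⟨cons h (A.append Q.reverse), isCycle_cons_append_reverse h hA hQ
      (fun z hzA hzQ ↦ hQC z hzQ (hAsupp z hzA)) (fun hv ↦ hvC (hAsupp v hv)) hxQ, ?_,
      by simp [mul_assoc]⟩
    simp only [Walk.toSubgraph, toSubgraph_append, toSubgraph_reverse]
    exact sup_le_sup_left (sup_le_sup_right hAC _) _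
  have hxc : x ≠ c := fun hxc ↦ hxQ (hxc ▸ Q.end_mem_support)
  have hsplit : (C.takeUntil c hcC).append (C.dropUntil c hcC) = C := C.take_spec hcC
  obtain ⟨D₁, hD₁, hD₁le, hD₁σ⟩ := cycle_of_arc _ (hC.isPath_takeUntil hcC)
    (isSubwalk_takeUntil C hcC).toSubgraph_le
  obtain ⟨D₂, hD₂, hD₂le, hD₂σ⟩ := cycle_of_arc _
    ((hsplit ▸ hC).isPath_of_append_right (not_nil_of_ne hxc)).reverse
    (by simpa using (isSubwalk_dropUntil C hcC).toSubgraph_le)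
  -- the ear's sign appears in both cycles and squares to `1`
  have hprod : D₁.sign σ * D₂.sign σ = -1 := by
    rw [hD₁σ, hD₂σ, sign_reverse, mul_mul_mul_comm, mul_mul_mul_comm (σ _),
      Int.units_mul_self, Int.units_mul_self, one_mul, mul_one, ← sign_append, hsplit, hσC]
  rcases Int.units_eq_one_or (D₁.sign σ) with h₁ | h₁
  · exact ⟨D₂, hD₂, hD₂le, by rwa [h₁, one_mul] at hprod⟩
  · exact ⟨D₁, hD₁, hD₁le, h₁⟩

end SimpleGraph.Walk

namespace SimpleGraph.Subgraph
variable {G : SimpleGraph V}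

lemma preconnected_of_forall_exists_le {K : G.Subgraph}
    (h : ∀ a ∈ K.verts, ∀ b ∈ K.verts,
      ∃ H ≤ K, H.Preconnected ∧ a ∈ H.verts ∧ b ∈ H.verts) : K.Preconnected := by
  rw [preconnected_iff_forall_exists_walk_subgraph]
  intro a b ha hb
  obtain ⟨H, hHK, hH, haH, hbH⟩ := h a ha b hb
  obtain ⟨p, hp⟩ := (preconnected_iff_forall_exists_walk_subgraph H).mp hH haH hbH
  exact ⟨p, hp.trans hHK⟩

lemma exists_mem_verts_of_isChain {c : Set G.Subgraph} (hc : IsChain (· ≤ ·) c) {a b : V}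
    (ha : a ∈ (sSup c).verts) (hb : b ∈ (sSup c).verts) :
    ∃ H ∈ c, a ∈ H.verts ∧ b ∈ H.verts := by
  simp only [verts_sSup, Set.mem_iUnion, exists_prop] at ha hb
  obtain ⟨H₁, hH₁, ha⟩ := ha
  obtain ⟨H₂, hH₂, hb⟩ := hb
  obtain ⟨H, hH, h₁, h₂⟩ := hc.directedOn H₁ hH₁ H₂ hH₂
  exact ⟨H, hH, h₁.1 ha, h₂.1 hb⟩

end SimpleGraph.Subgraph

open SimpleGraph

variable {G : SimpleGraph V}

lemma NoCutVertex.preconnected_deleteVerts {H : G.Subgraph} (h : NoCutVertex G H)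
    (hH : H.Preconnected) (x : V) : (H.deleteVerts {x}).Preconnected := by
  by_cases hx : x ∈ H.verts
  · refine Subgraph.preconnected_of_forall_exists_le fun a ha b hb ↦ ?_
    exact ⟨_, le_rfl, (h x hx ⟨a, ha⟩).preconnected, ha, hb⟩
  · rwa [← Subgraph.deleteVerts_inter_verts_left_eq, Set.inter_singleton_eq_empty.mpr hx,
      Subgraph.deleteVerts_empty]

variable {c : Set G.Subgraph}

lemma connected_sSup_of_isChain (hc : IsChain (· ≤ ·) c) (hconn : ∀ H ∈ c, H.Connected)
    (hne : c.Nonempty) : (sSup c).Connected := by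
  obtain ⟨K, hK⟩ := hne
  refine Subgraph.connected_iff.mpr ⟨?_, (hconn K hK).nonempty.mono (le_sSup hK).1⟩
  refine Subgraph.preconnected_of_forall_exists_le fun a ha b hb ↦ ?_
  obtain ⟨H, hH, haH, hbH⟩ := Subgraph.exists_mem_verts_of_isChain hc ha hb
  exact ⟨H, le_sSup hH, (hconn H hH).preconnected, haH, hbH⟩

lemma noCutVertex_sSup_of_isChain (hc : IsChain (· ≤ ·) c)
    (hcut : ∀ H ∈ c, H.Connected ∧ NoCutVertex G H) : NoCutVertex G (sSup c) := by
  intro x _ hne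
  refine Subgraph.connected_iff.mpr ⟨?_, hne⟩
  refine Subgraph.preconnected_of_forall_exists_le fun a ha b hb ↦ ?_
  obtain ⟨H, hH, haH, hbH⟩ := Subgraph.exists_mem_verts_of_isChain hc ha.1 hb.1
  obtain ⟨hHconn, hHcut⟩ := hcut H hH
  exact ⟨H.deleteVerts {x}, Subgraph.deleteVerts_mono (le_sSup hH),
    hHcut.preconnected_deleteVerts hHconn.preconnected x, ⟨haH, ha.2⟩, ⟨hbH, hb.2⟩⟩

lemma exists_isBlock_le {H : G.Subgraph} (hH : H.Connected) (hHcut : NoCutVertex G H) :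
    ∃ B, IsBlock G B ∧ H ≤ B := by
  obtain ⟨B, hHB, hB⟩ := zorn_le_nonempty₀ {B : G.Subgraph | B.Connected ∧ NoCutVertex G B}
    (fun c hcS hc K hK ↦ ⟨sSup c,
      ⟨connected_sSup_of_isChain hc (fun H hH ↦ (hcS hH).1) ⟨K, hK⟩,
        noCutVertex_sSup_of_isChain hc hcS⟩, fun _ ↦ le_sSup⟩) H ⟨hH, hHcut⟩
  refine ⟨B, ⟨hB.prop.1, hB.prop.2, fun B' h₁ h₂ hle ↦ ?_⟩, hHB⟩
  exact le_antisymm (hB.2 ⟨h₁, h₂⟩ hle) hle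

def OnNegCycleIn (σ : Sym2 V → ℤˣ) (B : G.Subgraph) (v : V) : Prop :=
  ∃ C : G.Walk v v, C.IsCycle ∧ C.toSubgraph ≤ B ∧ C.sign σ = -1

variable {σ : Sym2 V → ℤˣ} {B : G.Subgraph} {u v x : V}

lemma OnNegCycleIn.of_adj (hB : NoCutVertex G B) (hx : OnNegCycleIn σ B x) (hvx : B.Adj v x) :
    OnNegCycleIn σ B v := by
  classical
  obtain ⟨C, hC, hCB, hσC⟩ := hx
  by_cases hvC : v ∈ C.support
  · exact ⟨C.rotate v hvC, hC.rotate hvC, (Walk.toSubgraph_rotate C hvC).symm ▸ hCB,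
      (C.sign_rotate σ hvC).trans hσC⟩
  have hv : v ∈ (B.deleteVerts {x}).verts := ⟨hvx.fst_mem, hvx.ne⟩
  have hsndC : C.snd ∈ C.support :=
    List.mem_of_mem_tail (Walk.snd_mem_tail_support hC.not_nil)
  have hsnd : C.snd ∈ (B.deleteVerts {x}).verts :=
    ⟨hCB.1 (C.mem_verts_toSubgraph.mpr hsndC), (C.adj_snd hC.not_nil).ne.symm⟩
  obtain ⟨p, hp⟩ := ((Subgraph.connected_iff_forall_exists_walk_subgraph _).mp
    (hB x (hCB.1 C.start_mem_verts_toSubgraph) ⟨v, hv⟩)).2 hv hsnd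
  obtain ⟨c, Q, hcC, hQ, hQp, hQC⟩ := p.exists_isPath_first_mem {z | z ∈ C.support} hsndC
  have hQB := hQp.trans hp
  have hxQ : x ∉ Q.support := fun hxQ ↦ (hQB.1 (Q.mem_verts_toSubgraph.mpr hxQ)).2 rfl
  obtain ⟨D, hD, hDle, hσD⟩ :=
    hC.exists_isCycle_sign_eq_neg_one_of_ear σ hσC hvx.adj_sub hvC hQ hcC hxQ hQC
  exact ⟨D, hD, hDle.trans (sup_le (subgraphOfAdj_le_of_adj B hvx)
    (sup_le hCB (hQB.trans Subgraph.deleteVerts_le))), hσD⟩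

lemma OnNegCycleIn.of_walk (hB : NoCutVertex G B) (p : G.Walk v u) (hp : p.toSubgraph ≤ B)
    (hu : OnNegCycleIn σ B u) : OnNegCycleIn σ B v := by
  induction p with
  | nil => exact hu
  | cons h p ih =>
    simp only [Walk.toSubgraph, sup_le_iff, subgraphOfAdj_le_iff] at hp
    exact (ih hp.2 hu).of_adj hB hp.1

/-- A vertex belongs to a negative cycle iff it lies in an unbalanced block. -/
theorem stmt_3 (G : SimpleGraph V) (σ : Sym2 V → ℤˣ) (v : V) :
    (∃ (u : V) (w : G.Walk u u), w.IsCycle ∧ v ∈ w.support ∧ (w.edges.map σ).prod = -1) ↔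
    (∃ B : G.Subgraph, IsBlock G B ∧ UnbalancedSub G σ B ∧ v ∈ B.verts) := by
  constructor
  · rintro ⟨u, w, hw, hvw, hσw⟩
    obtain ⟨B, hB, hwB⟩ := exists_isBlock_le w.toSubgraph_connected hw.noCutVertex_toSubgraph
    exact ⟨B, hB, ⟨u, w, hw, (Walk.toSubgraph_le_iff hw.not_nil).mp hwB, hσw⟩,
      hwB.1 (w.mem_verts_toSubgraph.mpr hvw)⟩
  · rintro ⟨B, ⟨hBconn, hBcut, -⟩, ⟨u, w, hw, hwE, hσw⟩, hvB⟩
    have hwB : w.toSubgraph ≤ B := (Walk.toSubgraph_le_iff hw.not_nil).mpr hwE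
    obtain ⟨p, hp⟩ := ((Subgraph.connected_iff_forall_exists_walk_subgraph B).mp hBconn).2 hvB
      (hwB.1 w.start_mem_verts_toSubgraph)
    obtain ⟨C, hC, -, hσC⟩ := OnNegCycleIn.of_walk hBcut p hp ⟨w, hw, hwB, hσw⟩
    exact ⟨v, C, hC, C.start_mem_support, hσC⟩
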